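/- For every decreasing sequence α of levels, an element x belongs to X^k_α = revBits_k(Y^k_α) if and only if x = (min X^k_α + i · step^k_α) mod 2^k for some integer i; i.e., the ranks in X^k_α form an arithmetic progression modulo 2^k with common difference step^k_α. -/

import Mathlib

/-- The `k`-bit reversal permutation of `{0,…,2^k−1}`. -/
def revBits (k x : ℕ) : ℕ := ∑ i ∈ Finset.range k, 2 ^ i * (x / 2 ^ (k - 1 - i) % 2)

/-- The sets of time slots `Y^k_α`.  A (decreasing) sequence `α = (l_0,…,l_r)` of the paper
is represented here as the list `[l_r, …, l_0]`, with the most recently appended level first: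
`Y^k_{()} = {0,…,2^k−1}` and `Y^k_{α·(l)} = {y ∈ Y^k_α : ⌈log₂(y − min Y^k_α + 1)⌉ = l}`. -/
noncomputable def Y (k : ℕ) : List ℕ → Finset ℕ
  | [] => Finset.range (2 ^ k)
  | l :: α => (Y k α).filter (fun y => Nat.clog 2 (y - sInf {z : ℕ | z ∈ Y k α} + 1) = l)

/-- Validity of the (reversed) sequence: the paper's `α` is strictly decreasing with
entries in `{0,…,k}`, i.e. the reversed list is strictly increasing with entries `≤ k`. -/
def ValidSeq (k : ℕ) (α : List ℕ) : Prop :=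
  List.Pairwise (· < ·) α ∧ ∀ l ∈ α, l ≤ k

/-- The ranks `X^k_α = revBits_k(Y^k_α)`. -/
noncomputable def X (k : ℕ) (α : List ℕ) : Finset ℕ := (Y k α).image (revBits k)

/-- `step^k_{()} = 1` and `step^k_{α·(l)} = 2^{k−l+1}`. -/
def stepA (k : ℕ) : List ℕ → ℕ
  | [] => 1
  | l :: _ => 2 ^ (k - l + 1)

/-!
Each refinement step `α ↦ l :: α` selects, inside the block `Y^k_α = [m, m + 2^t)`, the offsets
`y - m ∈ [2^(l-1), 2^l)`, so by induction `Y^k_α` is an aligned dyadic block: `2^t ∣ m`. Writing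
its elements as `2^t q + j` with `j < 2^t`, bit reversal sends them to
`revBits (k-t) q + 2^(k-t) · revBits t j`, and `revBits t` permutes `[0, 2^t)`. Hence
`X^k_α = {c + 2^(k-t) j : j < 2^t}` with `c < 2^(k-t)`, which is exactly the progression of
difference `2^(k-t)` modulo `2^k = 2^(k-t) · 2^t`; finally `step^k_α ≡ 2^(k-t) [MOD 2^k]`.
-/

theorem two_pow_mul_add_div_two_pow_mod_two_of_lt {t p q j : ℕ} (hp : p < t) :
    (2 ^ t * q + j) / 2 ^ p % 2 = j / 2 ^ p % 2 := by
  have h : 2 ^ t * q = 2 ^ p * (2 * (2 ^ (t - p - 1) * q)) := by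
    rw [← mul_assoc, ← mul_assoc, ← pow_succ, ← pow_add]; congr 2; omega
  rw [h, add_comm, Nat.add_mul_div_left _ _ (by positivity), Nat.add_mul_mod_self_left]

theorem two_pow_mul_add_div_two_pow {t q j : ℕ} (hj : j < 2 ^ t) (p : ℕ) :
    (2 ^ t * q + j) / 2 ^ (t + p) = q / 2 ^ p := by
  rw [pow_add, ← Nat.div_div_eq_div_mul, Nat.mul_add_div (by positivity), Nat.div_eq_of_lt hj,
    add_zero]

theorem revBits_two_pow_mul_add {t j : ℕ} (hj : j < 2 ^ t) (s q : ℕ) :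
    revBits (s + t) (2 ^ t * q + j) = revBits s q + 2 ^ s * revBits t j := by
  unfold revBits
  rw [Finset.sum_range_add, Finset.mul_sum]
  congr 1
  · refine Finset.sum_congr rfl fun i hi => ?_
    have := Finset.mem_range.1 hi
    rw [show s + t - 1 - i = t + (s - 1 - i) by omega, two_pow_mul_add_div_two_pow hj]
  · refine Finset.sum_congr rfl fun i hi => ?_
    have := Finset.mem_range.1 hi
    rw [show s + t - 1 - (s + i) = t - 1 - i by omega,
      two_pow_mul_add_div_two_pow_mod_two_of_lt (by omega), pow_add, mul_assoc]

theorem revBits_succ (k x : ℕ) : revBits (k + 1) x = revBits k (x / 2) + 2 ^ k * (x % 2) := by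
  have h := revBits_two_pow_mul_add (t := 1) (Nat.mod_lt x two_pos) k (x / 2)
  rw [pow_one, Nat.div_add_mod] at h
  simpa [revBits] using h

theorem revBits_lt (k x : ℕ) : revBits k x < 2 ^ k := by
  induction k generalizing x with
  | zero => simp [revBits]
  | succ k ih =>
    rw [revBits_succ, pow_succ]
    have := ih (x / 2)
    have : x % 2 ≤ 1 := Nat.le_of_lt_succ (Nat.mod_lt x two_pos)
    nlinarith

theorem image_revBits_range (k : ℕ) :
    (Finset.range (2 ^ k)).image (revBits k) = Finset.range (2 ^ k) := by
  refine (Finset.image_subset_iff.2 fun x _ => Finset.mem_range.2 (revBits_lt k x)).antisymm ?_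
  induction k with
  | zero => simp [revBits]
  | succ k ih =>
    intro y hy
    obtain ⟨q, hq, hqy⟩ :=
      Finset.mem_image.1 (ih (Finset.mem_range.2 (Nat.mod_lt y (pow_pos two_pos k))))
    have hy2 : y / 2 ^ k < 2 := by
      rw [Finset.mem_range, pow_succ] at hy
      exact Nat.div_lt_of_lt_mul hy
    refine Finset.mem_image.2 ⟨2 * q + y / 2 ^ k, ?_, ?_⟩
    · rw [Finset.mem_range] at hq ⊢
      rw [pow_succ]
      omega
    · rw [revBits_succ, Nat.mul_add_div two_pos, Nat.div_eq_of_lt hy2, add_zero, Nat.mul_add_mod,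
        Nat.mod_eq_of_lt hy2, hqy, Nat.mod_add_div]

theorem image_revBits_Ico (s t q : ℕ) :
    (Finset.Ico (2 ^ t * q) (2 ^ t * q + 2 ^ t)).image (revBits (s + t)) =
      (Finset.range (2 ^ t)).image (revBits s q + 2 ^ s * ·) := by
  have hIco : Finset.Ico (2 ^ t * q) (2 ^ t * q + 2 ^ t) =
      (Finset.range (2 ^ t)).image (2 ^ t * q + ·) := by
    rw [Finset.range_eq_Ico, Finset.image_add_left_Ico, add_zero]
  rw [hIco, Finset.image_image]
  conv_rhs => rw [← image_revBits_range t, Finset.image_image]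
  exact Finset.image_congr fun j hj => revBits_two_pow_mul_add (Finset.mem_range.1 hj) s q

theorem sInf_setOf_mem_Ico {a b : ℕ} (h : a < b) : sInf {z : ℕ | z ∈ Finset.Ico a b} = a := by
  show sInf (↑(Finset.Ico a b) : Set ℕ) = a
  rw [Finset.coe_Ico]
  exact csInf_Ico h

theorem sInf_setOf_mem_image_range_add_mul {n : ℕ} (hn : 0 < n) (c d : ℕ) :
    sInf {z : ℕ | z ∈ (Finset.range n).image (c + d * ·)} = c := by
  refine IsLeast.csInf_eq ⟨Finset.mem_image.2 ⟨0, Finset.mem_range.2 hn, by simp⟩, ?_⟩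
  intro z hz
  rw [Set.mem_ofPred_eq, Finset.mem_image] at hz
  obtain ⟨j, -, rfl⟩ := hz
  exact Nat.le_add_right c (d * j)

theorem mem_image_range_add_mul_iff {c d n s : ℕ} (hn : 0 < n) (hc : c < d)
    (hs : s ≡ d [MOD d * n]) (x : ℕ) :
    x ∈ (Finset.range n).image (c + d * ·) ↔ ∃ i, x = (c + i * s) % (d * n) := by
  have hmod (i : ℕ) : (c + i * s) % (d * n) = c + d * (i % n) := by
    have hlt : c + d * (i % n) < d * n := calc
      c + d * (i % n) < d * (i % n + 1) := by rw [mul_add_one]; omega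
      _ ≤ d * n := Nat.mul_le_mul_left d (Nat.mod_lt i hn)
    have hi : c + i * s ≡ c + d * (i % n) [MOD d * n] := calc
      c + i * s ≡ c + i * d [MOD d * n] := (hs.mul_left i).add_left c
      _ = c + d * (i % n) + d * n * (i / n) := by
        conv_lhs => rw [← Nat.mod_add_div i n]
        ring
      _ ≡ c + d * (i % n) [MOD d * n] := Nat.add_mul_mod_self_left _ _ _
    exact Eq.trans hi (Nat.mod_eq_of_lt hlt)
  constructor
  · intro hx
    obtain ⟨j, hj, rfl⟩ := Finset.mem_image.1 hx
    exact ⟨j, by rw [hmod, Nat.mod_eq_of_lt (Finset.mem_range.1 hj)]⟩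
  · rintro ⟨i, rfl⟩
    rw [hmod]
    exact Finset.mem_image_of_mem _ (Finset.mem_range.2 (Nat.mod_lt i hn))

/-- `2 ^ l / 2` is `2 ^ (l - 1)` for `l ≥ 1` and `0` for `l = 0`. -/
theorem clog_two_add_one_eq_iff {n l : ℕ} :
    Nat.clog 2 (n + 1) = l ↔ 2 ^ l / 2 ≤ n ∧ n < 2 ^ l := by
  rw [le_antisymm_iff, Nat.clog_le_iff_le_pow one_lt_two]
  rcases l with _ | l
  · simp
  · rw [← Nat.lt_iff_add_one_le (m := l), Nat.lt_clog_iff_pow_lt one_lt_two, pow_succ,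
      Nat.mul_div_cancel _ two_pos]
    omega

theorem filter_Ico_clog_two_sub_add_one {m t l : ℕ} (hl : l ≤ t) :
    (Finset.Ico m (m + 2 ^ t)).filter (fun y => Nat.clog 2 (y - m + 1) = l) =
      Finset.Ico (m + 2 ^ l / 2) (m + 2 ^ l) := by
  have := Nat.pow_le_pow_right two_pos hl
  ext y
  simp only [Finset.mem_filter, Finset.mem_Ico, clog_two_add_one_eq_iff]
  omega

/-- `Y k α` has `2 ^ logCardY k α` elements; for `α = 0 :: _` the truncated `0 - 1 = 0` matches
the singleton. -/
def logCardY (k : ℕ) : List ℕ → ℕ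
  | [] => k
  | l :: _ => l - 1

theorem ValidSeq.of_cons {k l : ℕ} {α : List ℕ} (h : ValidSeq k (l :: α)) : ValidSeq k α :=
  ⟨h.1.of_cons, fun l' hl' => h.2 l' (List.mem_cons_of_mem l hl')⟩

theorem ValidSeq.logCardY_le {k : ℕ} {α : List ℕ} (h : ValidSeq k α) : logCardY k α ≤ k := by
  cases α with
  | nil => exact le_rfl
  | cons l α => exact (Nat.sub_le l 1).trans (h.2 l List.mem_cons_self)

theorem ValidSeq.le_logCardY {k l : ℕ} {α : List ℕ} (h : ValidSeq k (l :: α)) :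
    l ≤ logCardY k α := by
  cases α with
  | nil => exact h.2 l List.mem_cons_self
  | cons l' α => exact Nat.le_sub_one_of_lt (List.rel_of_pairwise_cons h.1 List.mem_cons_self)

theorem exists_Y_eq_Ico {k : ℕ} {α : List ℕ} (h : ValidSeq k α) :
    ∃ m, 2 ^ logCardY k α ∣ m ∧ Y k α = Finset.Ico m (m + 2 ^ logCardY k α) := by
  induction α with
  | nil => exact ⟨0, dvd_zero _, by rw [Y, Finset.range_eq_Ico, zero_add]; rfl⟩
  | cons l α ih =>
    obtain ⟨m, hm, hY⟩ := ih h.of_cons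
    have hY' : Y k (l :: α) = Finset.Ico (m + 2 ^ l / 2) (m + 2 ^ l) := by
      rw [Y, hY, sInf_setOf_mem_Ico (by simp), filter_Ico_clog_two_sub_add_one h.le_logCardY]
    rw [hY', logCardY]
    rcases l with _ | n
    · exact ⟨m, one_dvd m, by simp⟩
    · have hn : n ≤ logCardY k α := (Nat.le_succ n).trans h.le_logCardY
      refine ⟨m + 2 ^ n, ((pow_dvd_pow 2 hn).trans hm).add dvd_rfl, ?_⟩
      rw [pow_succ, Nat.mul_div_cancel _ two_pos, Nat.add_sub_cancel, mul_two, add_assoc]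

theorem exists_X_eq_image_range {k : ℕ} {α : List ℕ} (h : ValidSeq k α) :
    ∃ c < 2 ^ (k - logCardY k α),
      X k α = (Finset.range (2 ^ logCardY k α)).image (c + 2 ^ (k - logCardY k α) * ·) := by
  obtain ⟨_, ⟨q, rfl⟩, hY⟩ := exists_Y_eq_Ico h
  have hX := image_revBits_Ico (k - logCardY k α) (logCardY k α) q
  rw [Nat.sub_add_cancel h.logCardY_le] at hX
  exact ⟨_, revBits_lt _ q, by rw [X, hY, hX]⟩

theorem stepA_modEq {k : ℕ} {α : List ℕ} (h : ValidSeq k α) :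
    stepA k α ≡ 2 ^ (k - logCardY k α) [MOD 2 ^ k] := by
  rcases α with _ | ⟨_ | l, α⟩
  · simp only [stepA, logCardY, Nat.sub_self, pow_zero]; rfl
  · simp [stepA, logCardY, Nat.ModEq, pow_succ]
  · have := h.2 (l + 1) List.mem_cons_self
    simp only [stepA, logCardY]
    rw [show k - (l + 1) + 1 = k - (l + 1 - 1) by omega]

/-- The ranks `X^k_α` form an arithmetic progression mod `2^k` with difference `step^k_α`. -/
theorem X_arith_progression (k : ℕ) (α : List ℕ) (h : ValidSeq k α) (x : ℕ) :
    x ∈ X k α ↔ ∃ i : ℕ, x = (sInf {z : ℕ | z ∈ X k α} + i * stepA k α) % 2 ^ k := by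
  obtain ⟨c, hc, hX⟩ := exists_X_eq_image_range h
  have hk : 2 ^ k = 2 ^ (k - logCardY k α) * 2 ^ logCardY k α := by
    rw [← pow_add, Nat.sub_add_cancel h.logCardY_le]
  rw [hX, sInf_setOf_mem_image_range_add_mul (by positivity), hk]
  exact mem_image_range_add_mul_iff (by positivity) hc (hk ▸ stepA_modEq h) x
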